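/- Let ϑ ∈ (0,1), ν ∈ (0,1], a > 0, b > 0 and t > 0. Set q = 1/Γ(1+ν) and D = ν q² B(ν, 1+ν), where B denotes the Euler Beta function. Define v(s) = q (s/b)^{aν} (1 − q (s/b)^{aν}) + 2D (s/b)^{2aν}. Then the function F(t) = (1/Γ(1−ϑ)) · ∫₀ᵗ (t−s)^{−ϑ} v(s) ds has derivative at t equal to (q b^{−aν} Γ(1+aν)/Γ(1−ϑ+aν)) · t^{aν−ϑ} + (2D − q²) b^{−2aν} (Γ(1+2aν)/Γ(1−ϑ+2aν)) · t^{2aν−ϑ}. -/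

import Mathlib

open Real MeasureTheory Filter Topology

/-!
For `s ≥ 0` the variance is `c₁ s^p + c₂ s^(2p)` with `p = aν`, and the Riemann–Liouville
integral of a power is again a power: the substitution `s = τx` turns
`∫₀^τ (τ - s)^(α-1) s^p ds` into `B(p+1, α) τ^(p+α)`. Differentiating in `τ` and using
`Γ(e+1) = e Γ(e)` gives `Γ(p+1)/Γ(p+α) · t^(p+α-1)` for each power.
-/

theorem integral_rpow_mul_sub_rpow {u v a : ℝ} (hu : 0 < u) (hv : 0 < v) (ha : 0 < a) :
    ∫ x in 0..a, x ^ (u - 1) * (a - x) ^ (v - 1)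
      = Gamma u * Gamma v / Gamma (u + v) * a ^ (u + v - 1) := by
  have h := Complex.betaIntegral_scaled u v ha
  rw [Complex.betaIntegral_eq_Gamma_mul_div _ _ (by simpa) (by simpa)] at h
  apply Complex.ofReal_injective
  rw [← intervalIntegral.integral_ofReal]
  have hcongr : ∫ x in 0..a, ((x ^ (u - 1) * (a - x) ^ (v - 1) : ℝ) : ℂ)
      = ∫ x in 0..a, (x : ℂ) ^ ((u : ℂ) - 1) * ((a : ℂ) - x) ^ ((v : ℂ) - 1) := by
    refine intervalIntegral.integral_congr fun x hx => ?_
    rw [Set.uIcc_of_le ha.le] at hx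
    push_cast [Complex.ofReal_cpow hx.1, Complex.ofReal_cpow (sub_nonneg.2 hx.2)]
    rfl
  rw [hcongr, h]
  push_cast [Complex.ofReal_cpow ha.le, ← Complex.Gamma_ofReal]
  ring

theorem div_Gamma_add_one (s : ℝ) : s / Gamma (s + 1) = (Gamma s)⁻¹ := by
  rcases eq_or_ne s 0 with rfl | hs
  · simp [Gamma_zero]
  · rw [Gamma_add_one hs, div_mul_cancel_left₀ hs]

noncomputable def riemannLiouvilleIntegral (α : ℝ) (f : ℝ → ℝ) (τ : ℝ) : ℝ :=
  1 / Gamma α * ∫ s in 0..τ, (τ - s) ^ (α - 1) * f s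

section RiemannLiouville

variable {α p τ : ℝ}

theorem riemannLiouvilleIntegral_rpow (hα : 0 < α) (hp : -1 < p) (hτ : 0 < τ) :
    riemannLiouvilleIntegral α (· ^ p) τ = Gamma (p + 1) / Gamma (p + 1 + α) * τ ^ (p + α) := by
  have hkernel : ∫ s in 0..τ, (τ - s) ^ (α - 1) * s ^ p
      = ∫ s in 0..τ, s ^ (p + 1 - 1) * (τ - s) ^ (α - 1) := by
    simp only [add_sub_cancel_right, mul_comm]
  rw [riemannLiouvilleIntegral, hkernel,
    integral_rpow_mul_sub_rpow (by linarith) hα hτ, show p + 1 + α - 1 = p + α by ring]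
  field_simp [(Gamma_pos_of_pos hα).ne']

theorem intervalIntegrable_sub_rpow_mul_rpow (hα : 0 < α) (hp : -1 < p) (hτ : 0 < τ) :
    IntervalIntegrable (fun s => (τ - s) ^ (α - 1) * s ^ p) volume 0 τ := by
  -- a non-integrable integrand would have integral `0`, but the closed form is positive
  refine intervalIntegral.intervalIntegrable_of_integral_ne_zero fun h => ?_
  have hval := riemannLiouvilleIntegral_rpow hα hp hτ
  rw [riemannLiouvilleIntegral, h, mul_zero] at hval
  have : 0 < Gamma (p + 1) / Gamma (p + 1 + α) * τ ^ (p + α) := by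
    have := Gamma_pos_of_pos (show 0 < p + 1 by linarith)
    have := Gamma_pos_of_pos (show 0 < p + 1 + α by linarith)
    positivity
  exact this.ne hval

theorem hasDerivAt_riemannLiouvilleIntegral_rpow (hα : 0 < α) (hp : -1 < p) {t : ℝ}
    (ht : 0 < t) :
    HasDerivAt (riemannLiouvilleIntegral α (· ^ p))
      (Gamma (p + 1) / Gamma (p + α) * t ^ (p + α - 1)) t := by
  have hclosed : riemannLiouvilleIntegral α (· ^ p)
      =ᶠ[𝓝 t] fun τ => Gamma (p + 1) / Gamma (p + 1 + α) * τ ^ (p + α) :=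
    eventually_gt_nhds ht |>.mono fun τ hτ => riemannLiouvilleIntegral_rpow hα hp hτ
  refine (((hasDerivAt_rpow_const (Or.inl ht.ne')).const_mul _).congr_of_eventuallyEq
    hclosed).congr_deriv ?_
  rw [add_right_comm, div_eq_mul_inv _ (Gamma (p + α)), ← div_Gamma_add_one]
  ring

theorem riemannLiouvilleIntegral_congr {f g : ℝ → ℝ} (hτ : 0 ≤ τ)
    (h : Set.EqOn f g (Set.Ioc 0 τ)) :
    riemannLiouvilleIntegral α f τ = riemannLiouvilleIntegral α g τ := by
  simp only [riemannLiouvilleIntegral, intervalIntegral.integral_of_le hτ]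
  rw [setIntegral_congr_fun measurableSet_Ioc fun s hs => by rw [h hs]]

theorem riemannLiouvilleIntegral_linear_combination {f g : ℝ → ℝ} (c d : ℝ)
    (hf : IntervalIntegrable (fun s => (τ - s) ^ (α - 1) * f s) volume 0 τ)
    (hg : IntervalIntegrable (fun s => (τ - s) ^ (α - 1) * g s) volume 0 τ) :
    riemannLiouvilleIntegral α (fun s => c * f s + d * g s) τ
      = c * riemannLiouvilleIntegral α f τ + d * riemannLiouvilleIntegral α g τ := by
  simp only [riemannLiouvilleIntegral, mul_add, mul_left_comm _ c, mul_left_comm _ d]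
  rw [intervalIntegral.integral_add (hf.const_mul c) (hg.const_mul d),
    intervalIntegral.integral_const_mul, intervalIntegral.integral_const_mul]
  ring

end RiemannLiouville

theorem variance_eq_rpow_combination (q D x : ℝ) {b s : ℝ} (hb : 0 < b) (hs : 0 ≤ s) :
    q * (s / b) ^ x * (1 - q * (s / b) ^ x) + 2 * D * (s / b) ^ (2 * x)
      = q * b ^ (-x) * s ^ x + (2 * D - q ^ 2) * b ^ (-(2 * x)) * s ^ (2 * x) := by
  have hsb : 0 ≤ s / b := div_nonneg hs hb.le
  rw [mul_comm 2 x, ← neg_mul, rpow_mul hsb, rpow_mul hs, rpow_mul hb.le, rpow_two, rpow_two,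
    rpow_two, div_rpow hs hb.le, rpow_neg hb.le]
  ring

theorem stmt_7_general (ϑ ν a b : ℝ) (hϑ : ϑ ∈ Set.Ioo (0 : ℝ) 1)
    (hν : ν ∈ Set.Ioc (0 : ℝ) 1) (ha : 0 < a) (hb : 0 < b) (t : ℝ) (ht : 0 < t)
    (q D : ℝ) :
    HasDerivAt
      (fun τ : ℝ => (1 / Real.Gamma (1 - ϑ)) *
        ∫ s in (0 : ℝ)..τ, (τ - s) ^ (-ϑ) *
          (q * (s / b) ^ (a * ν) * (1 - q * (s / b) ^ (a * ν))
            + 2 * D * (s / b) ^ (2 * a * ν)))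
      (q * b ^ (-(a * ν)) * Real.Gamma (1 + a * ν) / Real.Gamma (1 - ϑ + a * ν)
          * t ^ (a * ν - ϑ)
        + (2 * D - q ^ 2) * b ^ (-(2 * a * ν))
          * (Real.Gamma (1 + 2 * a * ν) / Real.Gamma (1 - ϑ + 2 * a * ν))
          * t ^ (2 * a * ν - ϑ)) t := by
  have hα : 0 < 1 - ϑ := sub_pos.2 hϑ.2
  have hpos : 0 < a * ν := mul_pos ha hν.1
  have hp : -1 < a * ν := by linarith
  have hr : -1 < 2 * (a * ν) := by linarith
  simp only [mul_assoc 2 a ν]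
  refine ((((hasDerivAt_riemannLiouvilleIntegral_rpow hα hp ht).const_mul
      (q * b ^ (-(a * ν)))).add ((hasDerivAt_riemannLiouvilleIntegral_rpow hα hr ht).const_mul
      ((2 * D - q ^ 2) * b ^ (-(2 * (a * ν)))))).congr_of_eventuallyEq ?_).congr_deriv ?_
  · filter_upwards [eventually_gt_nhds ht] with τ hτ
    rw [Pi.add_apply, ← riemannLiouvilleIntegral_linear_combination _ _
        (intervalIntegrable_sub_rpow_mul_rpow hα hp hτ)
        (intervalIntegrable_sub_rpow_mul_rpow hα hr hτ),
      ← riemannLiouvilleIntegral_congr hτ.le fun s hs =>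
        variance_eq_rpow_combination q D (a * ν) hb hs.1.le]
    simp only [riemannLiouvilleIntegral, sub_sub_cancel_left]
  · rw [show a * ν + (1 - ϑ) - 1 = a * ν - ϑ by ring,
      show 2 * (a * ν) + (1 - ϑ) - 1 = 2 * (a * ν) - ϑ by ring,
      add_comm (a * ν) 1, add_comm (2 * (a * ν)) 1,
      add_comm (a * ν) (1 - ϑ), add_comm (2 * (a * ν)) (1 - ϑ)]
    ring

/-- Lemma 3.6 (variance part), Weibull rate `Λ(t) = (t/b)^a`: with
`q = 1/Γ(1+ν)` and `D = ν q² B(ν, 1+ν)` (Euler Beta function), the fractional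
integral of order `1−ϑ` of the variance
`v(s) = q(s/b)^(aν)(1 − q(s/b)^(aν)) + 2D(s/b)^(2aν)` has derivative
`q b^(−aν) Γ(1+aν)/Γ(1−ϑ+aν) · t^(aν−ϑ) + (2D − q²) b^(−2aν) Γ(1+2aν)/Γ(1−ϑ+2aν) · t^(2aν−ϑ)`
at `t > 0`. -/
theorem stmt_7 (ϑ ν a b : ℝ) (hϑ : ϑ ∈ Set.Ioo (0 : ℝ) 1)
    (hν : ν ∈ Set.Ioc (0 : ℝ) 1) (ha : 0 < a) (hb : 0 < b) (t : ℝ) (ht : 0 < t)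
    (q D : ℝ) (hq : q = 1 / Real.Gamma (1 + ν))
    (hD : D = ν * q ^ 2 * ∫ x in (0 : ℝ)..1, x ^ (ν - 1) * (1 - x) ^ ((1 + ν) - 1)) :
    HasDerivAt
      (fun τ : ℝ => (1 / Real.Gamma (1 - ϑ)) *
        ∫ s in (0 : ℝ)..τ, (τ - s) ^ (-ϑ) *
          (q * (s / b) ^ (a * ν) * (1 - q * (s / b) ^ (a * ν))
            + 2 * D * (s / b) ^ (2 * a * ν)))
      (q * b ^ (-(a * ν)) * Real.Gamma (1 + a * ν) / Real.Gamma (1 - ϑ + a * ν)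
          * t ^ (a * ν - ϑ)
        + (2 * D - q ^ 2) * b ^ (-(2 * a * ν))
          * (Real.Gamma (1 + 2 * a * ν) / Real.Gamma (1 - ϑ + 2 * a * ν))
          * t ^ (2 * a * ν - ϑ)) t :=
  stmt_7_general ϑ ν a b hϑ hν ha hb t ht q D
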